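/- For a nonzero generalized Euclidean distance matrix D and any real r with 0 < r < 1, the matrix (ρ(D)I - D)^r (defined via diagonalization over the real eigenvalues of D) is an M-matrix. -/

import Mathlib

open Matrix

/-- An M-matrix: a matrix of the form `ρ • I - S` with `S` entrywise nonnegative and
`ρ` at least the spectral radius of `S`. -/
def IsMMatrix {n : ℕ} (M : Matrix (Fin n) (Fin n) ℝ) : Prop :=
  ∃ (ρ : ℝ) (S : Matrix (Fin n) (Fin n) ℝ), (∀ i j, 0 ≤ S i j) ∧
    M = ρ • (1 : Matrix (Fin n) (Fin n) ℝ) - S ∧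
    ∀ μ ∈ spectrum ℂ (S.map Complex.ofReal), ‖μ‖ ≤ ρ

/-!
The entry `D i j` of a GEDM is `xᵀ L x ≥ 0` for `x = a eᵢ - b eⱼ`, so `D` and all its powers are
entrywise nonnegative. For `t > ρ(D)` the binomial series gives
`t ^ r • I - (t I - D) ^ r = ∑_{m ≥ 1} (-1) ^ (m + 1) (r choose m) t ^ (r - m) D ^ m`, and for
`0 ≤ r ≤ 1` every coefficient is nonnegative; letting `t → ρ(D)` shows that
`S = ρ(D) ^ r • I - (ρ(D) I - D) ^ r` is entrywise nonnegative. `S` is diagonalised by the same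
`A` as `D`, with eigenvalues `ρ(D) ^ r - (ρ(D) - δ k) ^ r`, each of absolute value at most
`ρ(D) ^ r` because `0 ≤ ρ(D) - δ k ≤ 2 ρ(D)` and `2 ^ r ≤ 2`.
-/

lemma Ring.neg_one_pow_mul_choose_succ_nonneg {r : ℝ} (hr0 : 0 ≤ r) (hr1 : r ≤ 1) (m : ℕ) :
    0 ≤ (-1) ^ m * Ring.choose r (m + 1) := by
  induction m with
  | zero => simpa using hr0
  | succ m ih =>
    have hrec : ((m : ℝ) + 2) * Ring.choose r (m + 2) = Ring.choose r (m + 1) * (r - (m + 1)) := by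
      have := Ring.choose_smul_choose r (n := m + 2) (k := m + 1) (by omega)
      rw [Nat.choose_succ_self_right, show m + 2 - (m + 1) = 1 by omega, Ring.choose_one_right,
        nsmul_eq_mul] at this
      push_cast at this
      linear_combination this
    have key : ((-1) ^ (m + 1) * Ring.choose r (m + 2)) * ((m : ℝ) + 2)
        = ((-1) ^ m * Ring.choose r (m + 1)) * ((m + 1) - r) := by
      rw [pow_succ]
      linear_combination (-(-1 : ℝ) ^ m) * hrec
    refine nonneg_of_mul_nonneg_left (b := (m : ℝ) + 2) ?_ (by positivity)
    rw [key]
    exact mul_nonneg ih (by linarith)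

lemma Real.hasSum_choose_mul_rpow_sub {r t x : ℝ} (hx : |x| < t) :
    HasSum (fun m => t ^ r * Ring.choose r m * (-t⁻¹) ^ m * x ^ m) ((t - x) ^ r) := by
  have ht : 0 < t := (abs_nonneg x).trans_lt hx
  have hxt : |x / t| < 1 := by rwa [abs_div, abs_of_pos ht, div_lt_one ht]
  have hu : -(x / t) ∈ Metric.eball (0 : ℝ) 1 := by
    simpa [enorm_eq_ofReal_abs] using hxt
  have hsum := (one_add_rpow_hasFPowerSeriesOnBall_zero (a := r)).hasSum hu |>.mul_left (t ^ r)
  have hval : t ^ r * (1 + (0 + -(x / t))) ^ r = (t - x) ^ r := by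
    rw [← mul_rpow ht.le (by linarith [(abs_lt.mp hxt).2])]
    congr 1
    field_simp
    ring
  have hterm : ∀ m : ℕ, (t ^ r * binomialSeries ℝ r m fun _ => -(x / t))
      = t ^ r * Ring.choose r m * (-t⁻¹) ^ m * x ^ m := fun m => by
    simp only [binomialSeries_apply, List.ofFn_const, List.prod_replicate, smul_eq_mul]
    ring
  simpa only [hval, hterm] using hsum

lemma abs_rpow_sub_rpow_le {ρ x r : ℝ} (hx0 : 0 ≤ x) (hx : x ≤ 2 * ρ) (hr0 : 0 ≤ r)
    (hr1 : r ≤ 1) : |ρ ^ r - x ^ r| ≤ ρ ^ r := by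
  have hρ : 0 ≤ ρ := by linarith
  have hxr : x ^ r ≤ 2 * ρ ^ r :=
    calc x ^ r ≤ (2 * ρ) ^ r := Real.rpow_le_rpow hx0 hx hr0
      _ = 2 ^ r * ρ ^ r := Real.mul_rpow zero_le_two hρ
      _ ≤ 2 * ρ ^ r := by
        gcongr
        simpa using Real.rpow_le_rpow_of_exponent_le one_le_two hr1
  rw [abs_le]
  constructor <;> linarith [Real.rpow_nonneg hx0 r]

lemma Matrix.PosSemidef.sq_mul_add_sq_mul_sub_nonneg {ι : Type*} [Fintype ι] [DecidableEq ι]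
    {L : Matrix ι ι ℝ} (hL : L.PosSemidef) (a b : ℝ) (i j : ι) :
    0 ≤ a ^ 2 * L i i + b ^ 2 * L j j - 2 * a * b * L i j := by
  have hx := hL.dotProduct_mulVec_nonneg (a • Pi.single i 1 - b • Pi.single j 1)
  have hsym : L j i = L i j := by simpa using hL.1.apply i j
  simp only [star_trivial, mulVec_sub, mulVec_smul, mulVec_single_one, dotProduct_sub,
    sub_dotProduct, smul_dotProduct, dotProduct_smul, single_one_dotProduct, col_apply,
    smul_eq_mul, hsym] at hx
  linarith

section Diagonalisable

variable {ι : Type*} [Fintype ι] [DecidableEq ι]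

lemma Matrix.mul_diagonal_mul_inv_pow {R : Type*} [CommRing R] {A : Matrix ι ι R}
    (hA : IsUnit A) (δ : ι → R) (m : ℕ) :
    (A * diagonal δ * A⁻¹) ^ m = A * diagonal (δ ^ m) * A⁻¹ := by
  simpa [coe_units_inv, diagonal_pow] using Units.conj_pow hA.unit (diagonal δ) m

lemma Matrix.mul_diagonal_const_sub_mul_inv {R : Type*} [CommRing R] {A : Matrix ι ι R}
    (hA : IsUnit A) (c : R) (f : ι → R) :
    A * diagonal (fun k => c - f k) * A⁻¹ = c • 1 - A * diagonal f * A⁻¹ := by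
  rw [← diagonal_sub, mul_sub, sub_mul, ← smul_one_eq_diagonal, mul_smul_one, smul_mul,
    mul_nonsing_inv A ((isUnit_iff_isUnit_det A).mp hA)]

lemma Matrix.hasSum_smul_mul_diagonal_mul_inv_pow {A : Matrix ι ι ℝ} (hA : IsUnit A)
    {δ g : ι → ℝ} {c : ℕ → ℝ} (h : ∀ k, HasSum (fun m => c m * δ k ^ m) (g k)) :
    HasSum (fun m => c m • (A * diagonal δ * A⁻¹) ^ m) (A * diagonal g * A⁻¹) := by
  have hterm : ∀ m, A * diagonal (fun k => c m * δ k ^ m) * A⁻¹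
      = c m • (A * diagonal δ * A⁻¹) ^ m := by
    intro m
    rw [mul_diagonal_mul_inv_pow hA, ← smul_mul, ← Matrix.mul_smul, ← diagonal_smul]
    rfl
  simpa only [hterm] using ((Pi.hasSum.mpr h).matrix_diagonal.mul_left A).mul_right A⁻¹

lemma Matrix.spectrum_map_ofReal_mul_diagonal_mul_inv {A : Matrix ι ι ℝ} (hA : IsUnit A)
    (g : ι → ℝ) :
    spectrum ℂ ((A * diagonal g * A⁻¹).map Complex.ofReal) = Set.range (fun k => (g k : ℂ)) := by
  set u := Units.map (Complex.ofRealHom.mapMatrix : Matrix ι ι ℝ →+* Matrix ι ι ℂ).toMonoidHom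
    hA.unit
  have hu : (A * diagonal g * A⁻¹).map Complex.ofReal
      = (u : Matrix ι ι ℂ) * diagonal (fun k => (g k : ℂ)) * (↑(u⁻¹) : Matrix ι ι ℂ) := by
    change Complex.ofRealHom.mapMatrix (A * diagonal g * A⁻¹) = _
    simp [u, coe_units_inv]
  rw [hu, spectrum.units_conjugate, spectrum_diagonal]

lemma rpow_smul_one_sub_mul_diagonal_rpow_mul_inv_apply_nonneg_of_lt {A : Matrix ι ι ℝ}
    (hA : IsUnit A) {δ : ι → ℝ} (hD : ∀ i j, 0 ≤ (A * diagonal δ * A⁻¹) i j) {r : ℝ}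
    (hr0 : 0 ≤ r) (hr1 : r ≤ 1) {t : ℝ} (ht : ∀ k, |δ k| < t) (i j : ι) :
    0 ≤ (t ^ r • 1 - A * diagonal (fun k => (t - δ k) ^ r) * A⁻¹) i j := by
  have ht0 : 0 ≤ t := (abs_nonneg (δ i)).trans (ht i).le
  have hsum := Pi.hasSum.mp (Pi.hasSum.mp (hasSum_smul_mul_diagonal_mul_inv_pow hA
    fun k => Real.hasSum_choose_mul_rpow_sub (r := r) (ht k)) i) j
  have htail := (hasSum_nat_add_iff' 1).mpr hsum
  simp only [Matrix.smul_apply, smul_eq_mul, Finset.range_one, Finset.sum_singleton,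
    Ring.choose_zero_right', pow_zero, mul_one] at htail
  have hterm : ∀ m : ℕ, t ^ r * Ring.choose r (m + 1) * (-t⁻¹) ^ (m + 1)
      * ((A * diagonal δ * A⁻¹) ^ (m + 1)) i j ≤ 0 := by
    intro m
    have hsign : t ^ r * Ring.choose r (m + 1) * (-t⁻¹) ^ (m + 1) =
        -(t ^ r * t⁻¹ ^ (m + 1) * ((-1) ^ m * Ring.choose r (m + 1))) := by ring
    rw [hsign, neg_mul, neg_nonpos]
    exact mul_nonneg
      (mul_nonneg (by positivity) (Ring.neg_one_pow_mul_choose_succ_nonneg hr0 hr1 m))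
      (pow_apply_nonneg hD _ i j)
  simp only [Matrix.sub_apply, Matrix.smul_apply, smul_eq_mul, sub_nonneg]
  linarith [htail.nonpos hterm]

lemma rpow_smul_one_sub_mul_diagonal_rpow_mul_inv_apply_nonneg {A : Matrix ι ι ℝ}
    (hA : IsUnit A) {δ : ι → ℝ} (hD : ∀ i j, 0 ≤ (A * diagonal δ * A⁻¹) i j) {r : ℝ}
    (hr0 : 0 ≤ r) (hr1 : r ≤ 1) {t : ℝ} (ht : ∀ k, |δ k| ≤ t) (i j : ι) :
    0 ≤ (t ^ r • 1 - A * diagonal (fun k => (t - δ k) ^ r) * A⁻¹) i j := by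
  have hcont : Continuous fun s : ℝ =>
      (s ^ r • 1 - A * diagonal (fun k => (s - δ k) ^ r) * A⁻¹) i j := by
    have := Real.continuous_rpow_const hr0
    fun_prop
  refine ge_of_tendsto (hcont.continuousWithinAt (s := Set.Ioi t)).tendsto
    (eventually_nhdsWithin_of_forall fun s hs => ?_)
  exact rpow_smul_one_sub_mul_diagonal_rpow_mul_inv_apply_nonneg_of_lt hA hD hr0 hr1
    (fun k => (ht k).trans_lt hs) i j

end Diagonalisable

theorem stmt6 (n : ℕ) (L D : Matrix (Fin n) (Fin n) ℝ) (hL : L.PosSemidef)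
    (a b : ℝ)
    (hD : ∀ i j, D i j = a ^ 2 * L i i + b ^ 2 * L j j - 2 * a * b * L i j)
    (A : Matrix (Fin n) (Fin n) ℝ) (hA : IsUnit A) (δ : Fin n → ℝ)
    (hdiag : A⁻¹ * D * A = Matrix.diagonal δ)
    (r : ℝ) (hr0 : 0 < r) (hr1 : r < 1) :
    IsMMatrix (A * Matrix.diagonal (fun i => ((⨆ k, |δ k|) - δ i) ^ r) * A⁻¹) := by
  set ρ := ⨆ k, |δ k|
  have hδρ : ∀ k, |δ k| ≤ ρ := le_ciSup (Set.finite_range _).bddAbove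
  have hdet := (isUnit_iff_isUnit_det A).mp hA
  have hDA : A * diagonal δ * A⁻¹ = D := by
    rw [← hdiag, ← mul_assoc A, mul_nonsing_inv_cancel_right _ _ hdet,
      mul_nonsing_inv_cancel_left _ _ hdet]
  have hD0 : ∀ i j, 0 ≤ (A * diagonal δ * A⁻¹) i j := fun i j => by
    rw [hDA, hD]
    exact hL.sq_mul_add_sq_mul_sub_nonneg a b i j
  refine ⟨ρ ^ r, _, rpow_smul_one_sub_mul_diagonal_rpow_mul_inv_apply_nonneg hA hD0 hr0.le hr1.le
    hδρ, (sub_sub_cancel _ _).symm, ?_⟩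
  rw [← mul_diagonal_const_sub_mul_inv hA, spectrum_map_ofReal_mul_diagonal_mul_inv hA]
  rintro _ ⟨k, rfl⟩
  have hδk := abs_le.mp (hδρ k)
  rw [Complex.norm_real, Real.norm_eq_abs]
  exact abs_rpow_sub_rpow_le (by linarith) (by linarith) hr0.le hr1.le
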